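/- arXiv:1703.01027 — 6 statements merged into one kernel-verified Lean document; each statement's English description precedes it below -/
import Mathlib

section
/- Let $F$ be a distribution function on $\mathbb{R}$ with density $f$ on the interval $[a, ra]$, where $a > 0$ and $r > 1$, and suppose that for some constant $A > 0$, $f(x)/\overline{F}(x) \ge A/x$ for all $x \in [a, ra]$, where $\overline{F}(x) = 1 - F(x)$. Then $\int_a^{ra} \frac{f(x)}{x}\,dx \ge \left(1 - \frac{1}{r}\right)\frac{A}{1+A}\frac{\overline{F}(a)}{a}$. -/
open MeasureTheory Real intervalIntegral

lemma triangle_swap (f g : ℝ → ℝ) (a b : ℝ) (hab : a ≤ b)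
    (hf : MeasureTheory.IntegrableOn f (Set.Ioc a b))
    (hg : ContinuousOn g (Set.Icc a b)) :
    ∫ x in a..b, (∫ t in a..x, f t) * g x = ∫ t in a..b, f t * ∫ x in t..b, g x := by
  set μ := volume.restrict (Set.Ioc a b) with hμ
  have hgi : MeasureTheory.IntegrableOn g (Set.Ioc a b) :=
    (hg.integrableOn_Icc).mono_set Set.Ioc_subset_Icc_self
  set h : ℝ × ℝ → ℝ := ({q : ℝ × ℝ | q.2 ≤ q.1}).indicator (fun q => g q.1 * f q.2) with hh
  have hmeas : MeasurableSet {q : ℝ × ℝ | q.2 ≤ q.1} :=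
    measurableSet_le measurable_snd measurable_fst
  have hint : Integrable h (μ.prod μ) := (hgi.mul_prod hf).indicator hmeas
  have swap := MeasureTheory.integral_integral_swap (f := fun x t => h (x, t))
    (by exact hint)
  have hL : (∫ x, ∫ t, h (x, t) ∂μ ∂μ) = ∫ x in a..b, (∫ t in a..x, f t) * g x := by
    rw [intervalIntegral.integral_of_le hab]
    refine setIntegral_congr_fun measurableSet_Ioc (fun x hx => ?_)
    have h1 : (fun t => h (x, t)) = (Set.Iic x).indicator (fun t => g x * f t) := by
      funext t
      by_cases ht : t ≤ x <;> simp [hh, Set.indicator_apply, ht]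
    rw [h1, MeasureTheory.integral_indicator measurableSet_Iic, hμ,
      Measure.restrict_restrict measurableSet_Iic]
    have h2 : Set.Iic x ∩ Set.Ioc a b = Set.Ioc a x := by
      rw [Set.inter_comm, Set.Ioc_inter_Iic, min_eq_right hx.2]
    rw [h2, MeasureTheory.integral_const_mul, intervalIntegral.integral_of_le hx.1.le]
    ring
  have hR : (∫ t, ∫ x, h (x, t) ∂μ ∂μ) = ∫ t in a..b, f t * ∫ x in t..b, g x := by
    rw [intervalIntegral.integral_of_le hab]
    refine setIntegral_congr_fun measurableSet_Ioc (fun t ht => ?_)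
    have h1 : (fun x => h (x, t)) = (Set.Ici t).indicator (fun x => g x * f t) := by
      funext x
      by_cases hx : t ≤ x <;> simp [hh, Set.indicator_apply, hx]
    rw [h1, MeasureTheory.integral_indicator measurableSet_Ici, hμ,
      Measure.restrict_restrict measurableSet_Ici]
    have h2 : Set.Ici t ∩ Set.Ioc a b = Set.Icc t b := by
      ext x
      simp only [Set.mem_inter_iff, Set.mem_Ici, Set.mem_Ioc, Set.mem_Icc]
      constructor
      · rintro ⟨h1, _, h3⟩; exact ⟨h1, h3⟩
      · rintro ⟨h1, h2⟩; exact ⟨h1, lt_of_lt_of_le ht.1 h1, h2⟩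
    rw [h2, MeasureTheory.integral_Icc_eq_integral_Ioc,
      MeasureTheory.integral_mul_const, intervalIntegral.integral_of_le ht.2]
    ring
  rw [← hL, ← hR] at *
  exact swap

theorem stmt_9 (F f : ℝ → ℝ) (a r A : ℝ) (ha : 0 < a) (hr : 1 < r) (hA : 0 < A)
    (hF_mono : Monotone F)
    (hf_nonneg : ∀ x ∈ Set.Icc a (r * a), 0 ≤ f x)
    (hf_int : IntervalIntegrable f volume a (r * a))
    (hdensity : ∀ x ∈ Set.Icc a (r * a), ∀ y ∈ Set.Icc a (r * a), x ≤ y →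
      F y - F x = ∫ t in x..y, f t)
    (hsurv_pos : ∀ x ∈ Set.Icc a (r * a), 0 < 1 - F x)
    (hfail : ∀ x ∈ Set.Icc a (r * a), A / x ≤ f x / (1 - F x)) :
    (1 - 1 / r) * (A / (1 + A)) * ((1 - F a) / a) ≤ ∫ x in a..(r * a), f x / x := by
  set b := r * a with hb
  have hab : a < b := by nlinarith
  have hb0 : 0 < b := ha.trans hab
  have haI : a ∈ Set.Icc a b := ⟨le_refl a, hab.le⟩
  have hbI : b ∈ Set.Icc a b := ⟨hab.le, le_refl b⟩
  set S := 1 - F a with hS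
  set T := 1 - F b with hT
  have hS0 : 0 < S := hsurv_pos a haI
  have hT0 : 0 < T := hsurv_pos b hbI
  have hTS : T ≤ S := by
    have := hF_mono hab.le
    simp only [hS, hT]; linarith
  have huIcc : Set.uIcc a b = Set.Icc a b := Set.uIcc_of_le hab.le
  -- continuity of g = x ^ (-2)
  set g : ℝ → ℝ := fun x => x ^ (-2 : ℤ) with hg
  have hgc : ContinuousOn g (Set.Icc a b) := fun x hx =>
    ((continuousAt_zpow₀ x (-2) (Or.inl (lt_of_lt_of_le ha hx.1).ne')).continuousWithinAt)
  -- integrability facts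
  have hf' : MeasureTheory.IntegrableOn f (Set.Ioc a b) :=
    (intervalIntegrable_iff_integrableOn_Ioc_of_le hab.le).mp hf_int
  have hinv : ContinuousOn (fun x : ℝ => x⁻¹) (Set.uIcc a b) := by
    rw [huIcc]
    exact fun x hx => (continuousAt_inv₀ (lt_of_lt_of_le ha hx.1).ne').continuousWithinAt
  have hI_int : IntervalIntegrable (fun x => f x / x) volume a b := by
    have := hf_int.mul_continuousOn hinv
    simpa [div_eq_mul_inv] using this
  set I := ∫ x in a..b, f x / x with hI
  set J := ∫ x in a..b, (1 - F x) * g x with hJ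
  -- F x = F a + ∫ t in a..x, f t on Icc a b
  have hFx : ∀ x ∈ Set.Icc a b, 1 - F x = S - ∫ t in a..x, f t := by
    intro x hx
    have := hdensity a haI x hx hx.1
    simp only [hS]; linarith
  -- ∫ x in t..b, g x = t⁻¹ - b⁻¹ for t ∈ Icc a b
  have hgint : ∀ t ∈ Set.Icc a b, (∫ x in t..b, g x) = t⁻¹ - b⁻¹ := by
    intro t ht
    have h0 : (0:ℝ) ∉ Set.uIcc t b := by
      rw [Set.uIcc_of_le ht.2]
      intro h0
      exact absurd h0.1 (by push_neg; linarith [ht.1])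
    rw [hg]
    rw [integral_zpow (Or.inr ⟨by norm_num, h0⟩)]
    norm_num
    ring
  -- key identity via triangle swap
  have key := triangle_swap f g a b hab.le hf' hgc
  -- compute RHS of key
  have hRHS : (∫ t in a..b, f t * ∫ x in t..b, g x) = I - b⁻¹ * (S - T) := by
    have h1 : (∫ t in a..b, f t * ∫ x in t..b, g x)
        = ∫ t in a..b, (f t / t - f t * b⁻¹) := by
      refine intervalIntegral.integral_congr (fun t ht => ?_)
      rw [huIcc] at ht
      rw [hgint t ht]
      have : t ≠ 0 := (lt_of_lt_of_le ha ht.1).ne'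
      field_simp
    have h2 : (∫ t in a..b, f t) = S - T := by
      have := hdensity a haI b hbI hab.le
      simp only [hS, hT]; linarith
    rw [h1, intervalIntegral.integral_sub hI_int (hf_int.mul_const _),
      intervalIntegral.integral_mul_const, h2, ← hI]
    ring
  -- compute LHS of key
  have hprim_cont : ContinuousOn (fun x => ∫ t in a..x, f t) (Set.Icc a b) := by
    have := intervalIntegral.continuousOn_primitive_interval'
      (μ := volume) (f := f) (b₁ := a) (b₂ := b) hf_int (by rw [huIcc]; exact haI)
    rwa [huIcc] at this
  have hLHS : (∫ x in a..b, (∫ t in a..x, f t) * g x) = S * (a⁻¹ - b⁻¹) - J := by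
    have hgi2 : IntervalIntegrable g volume a b := by
      apply ContinuousOn.intervalIntegrable; rwa [huIcc]
    have h1 : J = ∫ x in a..b, (S * g x - (∫ t in a..x, f t) * g x) := by
      refine intervalIntegral.integral_congr (fun x hx => ?_)
      rw [huIcc] at hx
      rw [hFx x hx]; ring
    have hHg : IntervalIntegrable (fun x => (∫ t in a..x, f t) * g x) volume a b := by
      apply ContinuousOn.intervalIntegrable
      rw [huIcc]
      exact hprim_cont.mul hgc
    have h2 : (∫ x in a..b, g x) = a⁻¹ - b⁻¹ := hgint a haI
    rw [h1, intervalIntegral.integral_sub (hgi2.const_mul S) hHg,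
      intervalIntegral.integral_const_mul, h2]
    ring
  have hid : I + J = S * a⁻¹ - T * b⁻¹ := by
    rw [hLHS, hRHS] at key
    linarith
  -- A * J ≤ I
  have hAJ : A * J ≤ I := by
    have hmono : (∫ x in a..b, A * ((1 - F x) * g x)) ≤ I := by
      apply intervalIntegral.integral_mono_on hab.le
      · -- integrability of A * ((1 - F x) * g x)
        have hFc : MeasureTheory.IntegrableOn (fun x => (1 - F x)) (Set.Ioc a b) := by
          have hm : MonotoneOn (fun x => F x) (Set.Icc a b) := hF_mono.monotoneOn _
          have : IntervalIntegrable F volume a b := by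
            apply MonotoneOn.intervalIntegrable
            rwa [huIcc]
          have := ((intervalIntegrable_iff_integrableOn_Ioc_of_le hab.le).mp this)
          exact (integrable_const (1:ℝ)).sub this
        have : IntervalIntegrable (fun x => (1 - F x) * g x) volume a b := by
          apply IntervalIntegrable.mul_continuousOn _ (by rwa [huIcc])
          exact (intervalIntegrable_iff_integrableOn_Ioc_of_le hab.le).mpr hFc
        exact this.const_mul A
      · exact hI_int
      · intro x hx
        have hx0 : 0 < x := lt_of_lt_of_le ha hx.1
        have hFxpos := hsurv_pos x hx
        have h1 : A / x ≤ f x / (1 - F x) := hfail x hx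
        have h2 : A * (1 - F x) ≤ f x * x := by
          rw [div_le_div_iff₀ hx0 hFxpos] at h1
          linarith
        have hgx : g x = (x * x)⁻¹ := by
          show x ^ (-2 : ℤ) = (x * x)⁻¹
          rw [show (-2 : ℤ) = -(2:ℤ) by ring, zpow_neg, zpow_two]
        rw [hgx]
        rw [show A * ((1 - F x) * (x * x)⁻¹) = (A * (1 - F x)) / (x * x) by ring,
          show f x / x = (f x * x) / (x * x) by field_simp]
        apply div_le_div_of_nonneg_right h2 (by positivity)
    calc A * J = ∫ x in a..b, A * ((1 - F x) * g x) := by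
          rw [hJ, intervalIntegral.integral_const_mul]
      _ ≤ I := hmono
  -- conclusion
  have htarget : (1 - 1 / r) * (A / (1 + A)) * (S / a)
      = (A / (1 + A)) * (S * a⁻¹ - S * b⁻¹) := by
    rw [hb]
    field_simp
  show (1 - 1 / r) * (A / (1 + A)) * (S / a) ≤ I
  rw [htarget]
  have h1 : S * a⁻¹ - S * b⁻¹ ≤ I + J := by
    rw [hid]
    have : T * b⁻¹ ≤ S * b⁻¹ := by
      apply mul_le_mul_of_nonneg_right hTS (by positivity)
    linarith
  have h2 : (A / (1 + A)) * (I + J) ≤ I := by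
    rw [div_mul_eq_mul_div, div_le_iff₀ (by linarith : (0:ℝ) < 1 + A)]
    nlinarith
  calc (A / (1 + A)) * (S * a⁻¹ - S * b⁻¹) ≤ (A / (1 + A)) * (I + J) := by
        apply mul_le_mul_of_nonneg_left h1 (by positivity)
    _ ≤ I := h2
end

section
/- Let $f(x) = \frac{1}{\sqrt{2\pi}} x^{-1} \exp\left(-\tfrac{1}{2}(\log x)^2\right)$ for $x > 0$ be the standard lognormal density. Then for every nonnegative integer $k$, $\int_0^{\infty} x^k f(x) \sin(2\pi \log x)\,dx = 0$. -/
open MeasureTheory Real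

theorem stmt_10 (f : ℝ → ℝ)
    (hf : ∀ x > 0, f x = (1 / Real.sqrt (2 * π)) * x⁻¹ * Real.exp (-(Real.log x) ^ 2 / 2)) :
    ∀ k : ℕ, ∫ x in Set.Ioi (0 : ℝ), x ^ k * f x * Real.sin (2 * π * Real.log x) = 0 := by
  intro k
  set C : ℝ := 1 / Real.sqrt (2 * π) with hC
  -- Step 1: substitute x = exp t
  have h1 : (∫ x in Set.Ioi (0 : ℝ), x ^ k * f x * Real.sin (2 * π * Real.log x))
      = ∫ t : ℝ, C * Real.exp ((k : ℝ) * t - t ^ 2 / 2) * Real.sin (2 * π * t) := by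
    have := integral_image_eq_integral_abs_deriv_smul (f := Real.exp)
      (f' := Real.exp) (s := Set.univ) MeasurableSet.univ
      (fun x _ => (Real.hasDerivAt_exp x).hasDerivWithinAt)
      (Real.exp_injective.injOn)
      (fun x => x ^ k * f x * Real.sin (2 * π * Real.log x))
    rw [Set.image_univ, Real.range_exp] at this
    rw [this, setIntegral_univ]
    refine integral_congr_ae (Filter.Eventually.of_forall fun t => ?_)
    have hpos : (0 : ℝ) < Real.exp t := Real.exp_pos t
    simp only
    rw [hf _ hpos, Real.log_exp, abs_of_pos hpos]
    rw [smul_eq_mul, ← Real.exp_nat_mul]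
    rw [show Real.exp t * (Real.exp ((k : ℝ) * t) * (C * (Real.exp t)⁻¹ *
        Real.exp (-t ^ 2 / 2)) * Real.sin (2 * π * t))
      = C * (Real.exp t * (Real.exp t)⁻¹) * (Real.exp ((k : ℝ) * t) *
        Real.exp (-t ^ 2 / 2)) * Real.sin (2 * π * t) by ring]
    rw [mul_inv_cancel₀ hpos.ne', ← Real.exp_add]
    ring_nf
  rw [h1]
  -- Step 2: shift t ↦ t + k
  have h2 : (∫ t : ℝ, C * Real.exp ((k : ℝ) * t - t ^ 2 / 2) * Real.sin (2 * π * t))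
      = ∫ t : ℝ, C * Real.exp ((k : ℝ) * (t + k) - (t + k) ^ 2 / 2) *
          Real.sin (2 * π * t) := by
    rw [← integral_add_right_eq_self
      (fun t : ℝ => C * Real.exp ((k : ℝ) * t - t ^ 2 / 2) * Real.sin (2 * π * t)) (k : ℝ)]
    refine integral_congr_ae (Filter.Eventually.of_forall fun t => ?_)
    simp only
    congr 1
    rw [show 2 * π * (t + (k : ℝ)) = 2 * π * t + (k : ℤ) * (2 * π) by push_cast; ring,
      Real.sin_add_int_mul_two_pi]
  rw [h2]
  -- Step 3: the integrand is odd
  have h3 : ∀ t : ℝ, (k : ℝ) * (t + k) - (t + k) ^ 2 / 2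
      = (k : ℝ) ^ 2 / 2 - t ^ 2 / 2 := fun t => by ring
  simp_rw [h3]
  set G : ℝ → ℝ := fun t => C * Real.exp ((k : ℝ) ^ 2 / 2 - t ^ 2 / 2) * Real.sin (2 * π * t)
    with hG
  have hodd : ∀ t : ℝ, G (-t) = -G t := by
    intro t
    simp only [hG]
    rw [show 2 * π * (-t) = -(2 * π * t) by ring, Real.sin_neg]
    ring_nf
  have := integral_neg_eq_self G (volume : Measure ℝ)
  simp_rw [hodd, integral_neg] at this
  linarith [this]
end

section
/- Let $f(x) = \frac{1}{\sqrt{2\pi}} x^{-1} \exp\left(-\tfrac{1}{2}(\log x)^2\right)$, $x > 0$, be the standard lognormal density, and for $\varepsilon \in [-1,1]$ define $f_\varepsilon(x) = f(x)[1 + \varepsilon \sin(2\pi \log x)]$. Then each $f_\varepsilon$ is a nonnegative probability density on $(0,\infty)$, and $\int_0^\infty x^k f_\varepsilon(x)\,dx = \int_0^\infty x^k f(x)\,dx = e^{k^2/2}$ for every nonnegative integer $k$. -/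
/-!
Under `x = exp t` the `k`-th moment of `f` becomes `(2π)^(-1/2) ∫ exp (k t - t² / 2) dt`, a shifted
Gaussian integral equal to `exp (k² / 2)`. The perturbation adds `ε ∫ exp (k t - t² / 2) sin (2π t) dt`,
which vanishes: the reflection `t ↦ 2k - t` fixes the weight and, as `4πk` is a period of `sin`,
flips the sign of `sin (2π t)`.
-/

open MeasureTheory Real

section VectorValued

variable {E : Type*} [NormedAddCommGroup E] [NormedSpace ℝ E]

theorem integral_Ioi_zero_eq_integral_exp_smul_comp_exp (g : ℝ → E) :
    ∫ x in Set.Ioi 0, g x = ∫ t, exp t • g (exp t) := by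
  rw [← range_exp, ← Set.image_univ,
    integral_image_eq_integral_abs_deriv_smul MeasurableSet.univ
      (fun t _ => (hasDerivAt_exp t).hasDerivWithinAt) exp_injective.injOn]
  simp [abs_of_pos (exp_pos _)]

theorem integral_Ioi_zero_inv_smul_comp_log (h : ℝ → E) :
    ∫ x in Set.Ioi 0, x⁻¹ • h (log x) = ∫ t, h t := by
  simp [integral_Ioi_zero_eq_integral_exp_smul_comp_exp, smul_smul, exp_ne_zero]

theorem integral_eq_zero_of_comp_sub_left_eq_neg {g : ℝ → E} (c : ℝ)
    (hg : ∀ t, g (c - t) = -g t) : ∫ t, g t = 0 := by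
  have h := integral_sub_left_eq_self g volume c
  simp only [hg, integral_neg] at h
  have h2 : (2 : ℝ) • ∫ t, g t = 0 := by rw [two_smul]; nth_rw 1 [← h]; exact neg_add_cancel _
  simpa using h2

end VectorValued

theorem exp_mul_sub_sq_div_two_eq (a t : ℝ) :
    exp (a * t - t ^ 2 / 2) = exp (a ^ 2 / 2) * exp (-(1 / 2) * (t - a) ^ 2) := by
  rw [← exp_add]; ring_nf

theorem integrable_exp_mul_sub_sq_div_two (a : ℝ) :
    Integrable fun t : ℝ => exp (a * t - t ^ 2 / 2) := by
  simp_rw [exp_mul_sub_sq_div_two_eq]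
  exact ((integrable_exp_neg_mul_sq (by norm_num)).comp_sub_right a).const_mul _

theorem integral_exp_mul_sub_sq_div_two (a : ℝ) :
    ∫ t, exp (a * t - t ^ 2 / 2) = √(2 * π) * exp (a ^ 2 / 2) := by
  simp_rw [exp_mul_sub_sq_div_two_eq]
  rw [integral_const_mul, integral_sub_right_eq_self (fun t => exp (-(1 / 2) * t ^ 2)) a,
    integral_gaussian, show π / (1 / 2) = 2 * π by ring, mul_comm]

theorem integral_exp_mul_sub_sq_div_two_mul_sin (n : ℤ) :
    ∫ t, exp (n * t - t ^ 2 / 2) * sin (2 * π * t) = 0 := by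
  refine integral_eq_zero_of_comp_sub_left_eq_neg (2 * n) fun t => ?_
  have hsin : sin (2 * π * (2 * n - t)) = -sin (2 * π * t) := by
    rw [← sin_int_mul_two_pi_sub _ (2 * n)]; push_cast; ring_nf
  rw [hsin, show (n : ℝ) * (2 * n - t) - (2 * n - t) ^ 2 / 2 = n * t - t ^ 2 / 2 by ring, mul_neg]

theorem integral_exp_mul_sub_sq_div_two_mul_one_add_sin (n : ℤ) (ε : ℝ) :
    ∫ t, exp (n * t - t ^ 2 / 2) * (1 + ε * sin (2 * π * t)) = √(2 * π) * exp (n ^ 2 / 2) := by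
  have hsin : Integrable fun t => exp (n * t - t ^ 2 / 2) * sin (2 * π * t) :=
    (integrable_exp_mul_sub_sq_div_two n).mul_bdd (c := 1) (by fun_prop)
      (Filter.Eventually.of_forall fun t => abs_sin_le_one _)
  simp_rw [mul_one_add, mul_left_comm _ ε]
  rw [integral_add (integrable_exp_mul_sub_sq_div_two n) (hsin.const_mul ε), integral_const_mul,
    integral_exp_mul_sub_sq_div_two_mul_sin, mul_zero, add_zero, integral_exp_mul_sub_sq_div_two]

noncomputable def lognormalDensity (x : ℝ) : ℝ :=
  1 / √(2 * π) * x⁻¹ * exp (-log x ^ 2 / 2)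

theorem lognormalDensity_nonneg {x : ℝ} (hx : 0 ≤ x) : 0 ≤ lognormalDensity x := by
  unfold lognormalDensity; positivity

theorem integral_pow_mul_lognormalDensity_mul_comp_log (k : ℕ) (h : ℝ → ℝ) :
    ∫ x in Set.Ioi 0, x ^ k * lognormalDensity x * h (log x)
      = (∫ t, exp (k * t - t ^ 2 / 2) * h t) / √(2 * π) := by
  have hx : ∀ x ∈ Set.Ioi (0 : ℝ), x ^ k * lognormalDensity x * h (log x)
      = x⁻¹ • (exp (k * log x - log x ^ 2 / 2) * h (log x) / √(2 * π)) := fun x hx => by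
    rw [sub_eq_add_neg, exp_add, ← log_pow, exp_log (pow_pos hx k), lognormalDensity, smul_eq_mul]
    ring_nf
  exact (setIntegral_congr_fun measurableSet_Ioi hx).trans
    ((integral_Ioi_zero_inv_smul_comp_log fun t => exp (k * t - t ^ 2 / 2) * h t / √(2 * π)).trans
      (integral_div _ _))

theorem integral_pow_mul_lognormalDensity_mul_one_add_sin (k : ℕ) (ε : ℝ) :
    ∫ x in Set.Ioi 0, x ^ k * lognormalDensity x * (1 + ε * sin (2 * π * log x))
      = exp (k ^ 2 / 2) := by
  have hsqrt : √(2 * π) ≠ 0 := by positivity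
  have h := integral_exp_mul_sub_sq_div_two_mul_one_add_sin k ε
  push_cast at h
  rw [integral_pow_mul_lognormalDensity_mul_comp_log k fun t => 1 + ε * sin (2 * π * t), h,
    mul_div_cancel_left₀ _ hsqrt]

theorem integral_pow_mul_lognormalDensity (k : ℕ) :
    ∫ x in Set.Ioi 0, x ^ k * lognormalDensity x = exp (k ^ 2 / 2) := by
  simpa using integral_pow_mul_lognormalDensity_mul_one_add_sin k 0

theorem stmt_11 (f fe : ℝ → ℝ) (ε : ℝ) (hε : ε ∈ Set.Icc (-1 : ℝ) 1)
    (hf : ∀ x > 0, f x = (1 / Real.sqrt (2 * π)) * x⁻¹ * Real.exp (-(Real.log x) ^ 2 / 2))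
    (hfe : ∀ x > 0, fe x = f x * (1 + ε * Real.sin (2 * π * Real.log x))) :
    (∀ x > 0, 0 ≤ fe x) ∧
    (∫ x in Set.Ioi (0 : ℝ), fe x) = 1 ∧
    (∀ k : ℕ, (∫ x in Set.Ioi (0 : ℝ), x ^ k * fe x)
        = ∫ x in Set.Ioi (0 : ℝ), x ^ k * f x) ∧
    (∀ k : ℕ, (∫ x in Set.Ioi (0 : ℝ), x ^ k * f x) = Real.exp ((k : ℝ) ^ 2 / 2)) := by
  have hfe' : ∀ x > 0, fe x = lognormalDensity x * (1 + ε * sin (2 * π * log x)) :=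
    fun x hx => by rw [hfe x hx, hf x hx, lognormalDensity]
  have moment_f (k : ℕ) : ∫ x in Set.Ioi (0 : ℝ), x ^ k * f x = exp ((k : ℝ) ^ 2 / 2) := by
    rw [← integral_pow_mul_lognormalDensity k]
    exact setIntegral_congr_fun measurableSet_Ioi fun x hx => by rw [hf x hx, lognormalDensity]
  have moment_fe (k : ℕ) : ∫ x in Set.Ioi (0 : ℝ), x ^ k * fe x = exp ((k : ℝ) ^ 2 / 2) := by
    rw [← integral_pow_mul_lognormalDensity_mul_one_add_sin k ε]
    exact setIntegral_congr_fun measurableSet_Ioi fun x hx => by rw [hfe' x hx, ← mul_assoc]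
  refine ⟨fun x hx => ?_, by simpa using moment_fe 0, fun k => (moment_fe k).trans
    (moment_f k).symm, moment_f⟩
  have hsin := abs_le.mp (abs_sin_le_one (2 * π * log x))
  rw [hfe' x hx]
  exact mul_nonneg (lognormalDensity_nonneg hx.le) (by nlinarith [hε.1, hε.2])
end

section
/- Let $n \ge 1$ be an integer and let $f_n(x) = \frac{1}{(2n+1)\sqrt{\pi}} |x|^{-2n/(2n+1)} \exp\left(-|x|^{2/(2n+1)}\right)$ for $x \ne 0$, the density of the $(2n+1)$-th power of a random variable with density $\frac{1}{\sqrt{\pi}}e^{-x^2}$. Then the Krein integral is finite: $\int_{-\infty}^{\infty} \frac{-\log f_n(x)}{1+x^2}\,dx < \infty$. -/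
open MeasureTheory Real Set

/-- An even function integrable on `Ici 0` is integrable. -/
lemma aux_integrable_of_even {F : ℝ → ℝ} (he : ∀ x, F (-x) = F x)
    (hI : IntegrableOn F (Ici (0:ℝ))) : Integrable F := by
  have hneg : IntegrableOn F (Iic (0:ℝ)) := by
    have hmap : (volume : Measure ℝ).restrict (Iic (0:ℝ)) =
        (((volume : Measure ℝ).restrict (Ici (0:ℝ))).map Neg.neg) := by
      have h1 : ((volume : Measure ℝ).map Neg.neg).restrict (Iic (0:ℝ)) =
          ((volume : Measure ℝ).restrict (Neg.neg ⁻¹' (Iic (0:ℝ)))).map Neg.neg :=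
        Measure.restrict_map measurable_neg measurableSet_Iic
      have h2 : (Neg.neg ⁻¹' (Iic (0:ℝ))) = Ici (0:ℝ) := by
        ext x; simp
      rw [h2] at h1
      rw [← h1, Measure.map_neg_eq_self]
    have hco : (Neg.neg : ℝ → ℝ) = ⇑(MeasurableEquiv.neg ℝ) := rfl
    rw [IntegrableOn, hmap, hco,
      (MeasurableEquiv.neg ℝ).measurableEmbedding.integrable_map_iff]
    have heq : (F ∘ ⇑(MeasurableEquiv.neg ℝ)) = F := funext he
    show Integrable (F ∘ ⇑(MeasurableEquiv.neg ℝ)) _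
    rw [heq]
    exact hI
  rw [← integrableOn_univ, ← Iic_union_Ici (a := (0:ℝ))]
  exact hneg.union hI

/-- `|x| ^ p / (1 + x ^ 2)` is integrable for `-1 < p < 1`. -/
lemma aux_integrable_rpow {p : ℝ} (hp1 : -1 < p) (hp2 : p < 1) :
    Integrable (fun x : ℝ => |x| ^ p / (1 + x ^ 2)) := by
  have hmeas : AEStronglyMeasurable (fun x : ℝ => |x| ^ p / (1 + x ^ 2)) volume := by
    have h1 : AEStronglyMeasurable
        (fun x : ℝ => Real.exp (Real.log |x| * p) / (1 + x ^ 2)) volume :=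
      ((Real.measurable_exp.comp (measurable_abs.log.mul_const p)).div
        (measurable_const.add (measurable_id.pow_const 2))).aestronglyMeasurable
    refine h1.congr ?_
    filter_upwards [compl_mem_ae_iff.2 (measure_singleton (0:ℝ))] with x hx
    rw [Real.rpow_def_of_pos (abs_pos.2 hx)]
  apply aux_integrable_of_even (fun x => by rw [abs_neg, neg_pow]; ring_nf)
  have h01 : IntegrableOn (fun x : ℝ => |x| ^ p / (1 + x ^ 2)) (Icc (0:ℝ) 1) := by
    have hint : IntegrableOn (fun x : ℝ => x ^ p) (Icc (0:ℝ) 1) := by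
      rw [integrableOn_Icc_iff_integrableOn_Ioc]
      have := intervalIntegral.intervalIntegrable_rpow' (a := 0) (b := 1) hp1
      simpa [intervalIntegrable_iff, uIoc_of_le (zero_le_one' ℝ)] using this
    refine Integrable.mono' hint hmeas.restrict ?_
    filter_upwards [ae_restrict_mem measurableSet_Icc] with x hx
    have hx0 : 0 ≤ x := hx.1
    rw [Real.norm_eq_abs, abs_of_nonneg (div_nonneg (Real.rpow_nonneg (abs_nonneg x) p)
      (by positivity)), abs_of_nonneg hx0]
    calc x ^ p / (1 + x ^ 2) ≤ x ^ p / 1 := by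
          apply div_le_div_of_nonneg_left (Real.rpow_nonneg hx0 p) one_pos
          nlinarith
      _ = x ^ p := div_one _
  have h1i : IntegrableOn (fun x : ℝ => |x| ^ p / (1 + x ^ 2)) (Ioi (1:ℝ)) := by
    have hint : IntegrableOn (fun x : ℝ => x ^ (p - 2)) (Ioi (1:ℝ)) :=
      integrableOn_Ioi_rpow_of_lt (by linarith) one_pos
    refine Integrable.mono' hint hmeas.restrict ?_
    filter_upwards [ae_restrict_mem measurableSet_Ioi] with x hx
    have hx1 : 1 < x := hx
    have hx0 : 0 < x := lt_trans one_pos hx1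
    rw [Real.norm_eq_abs, abs_of_nonneg (div_nonneg (Real.rpow_nonneg (abs_nonneg x) p)
      (by positivity)), abs_of_pos hx0]
    have h1 : x ^ p / (1 + x ^ 2) ≤ x ^ p / x ^ 2 := by
      apply div_le_div_of_nonneg_left (Real.rpow_nonneg hx0.le p) (by positivity)
      nlinarith
    calc x ^ p / (1 + x ^ 2) ≤ x ^ p / x ^ 2 := h1
      _ = x ^ (p - 2) := by
          rw [Real.rpow_sub hx0, Real.rpow_two]
  have : Ici (0:ℝ) = Icc 0 1 ∪ Ioi 1 := by
    ext x; simp only [mem_Ici, mem_union, mem_Icc, mem_Ioi]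
    constructor
    · intro h; rcases le_or_gt x 1 with h1 | h1
      · exact Or.inl ⟨h, h1⟩
      · exact Or.inr h1
    · rintro (⟨h, _⟩ | h) <;> linarith
  rw [this]
  exact h01.union h1i

/-- Bound on `|log t|` for `t ≥ 0`. -/
lemma aux_abs_log_le {t : ℝ} (ht : 0 ≤ t) :
    |Real.log t| ≤ 2 * t ^ ((1:ℝ)/2) + 2 * t ^ (-(1:ℝ)/2) := by
  rcases eq_or_lt_of_le ht with h | h
  · simp [← h]
  · have hub : Real.log t ≤ 2 * t ^ ((1:ℝ)/2) := by
      have h1 : Real.log (t ^ ((1:ℝ)/2)) ≤ t ^ ((1:ℝ)/2) - 1 :=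
        Real.log_le_sub_one_of_pos (Real.rpow_pos_of_pos h _)
      rw [Real.log_rpow h] at h1
      linarith
    have hlb : -Real.log t ≤ 2 * t ^ (-(1:ℝ)/2) := by
      have h1 : Real.log (t⁻¹ ^ ((1:ℝ)/2)) ≤ t⁻¹ ^ ((1:ℝ)/2) - 1 :=
        Real.log_le_sub_one_of_pos (Real.rpow_pos_of_pos (inv_pos.2 h) _)
      rw [Real.log_rpow (inv_pos.2 h), Real.log_inv] at h1
      have h2 : t⁻¹ ^ ((1:ℝ)/2) = t ^ (-(1:ℝ)/2) := by
        rw [Real.inv_rpow ht, ← Real.rpow_neg ht, neg_div]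
      rw [h2] at h1
      linarith
    have hpos1 : 0 ≤ t ^ ((1:ℝ)/2) := Real.rpow_nonneg ht _
    have hpos2 : 0 ≤ t ^ (-(1:ℝ)/2) := Real.rpow_nonneg ht _
    rcases abs_cases (Real.log t) with ⟨heq, _⟩ | ⟨heq, _⟩ <;> rw [heq] <;> linarith

/-- `log |x| / (1 + x ^ 2)` is integrable. -/
lemma aux_integrable_log :
    Integrable (fun x : ℝ => Real.log |x| / (1 + x ^ 2)) := by
  have hmeas : AEStronglyMeasurable (fun x : ℝ => Real.log |x| / (1 + x ^ 2)) volume :=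
    ((measurable_abs.log).div
      ((measurable_const.add (measurable_id.pow_const 2)))).aestronglyMeasurable
  have hbd : Integrable (fun x : ℝ =>
      2 * (|x| ^ ((1:ℝ)/2) / (1 + x ^ 2)) + 2 * (|x| ^ (-(1:ℝ)/2) / (1 + x ^ 2))) :=
    ((aux_integrable_rpow (by norm_num) (by norm_num)).const_mul 2).add
      ((aux_integrable_rpow (by norm_num) (by norm_num)).const_mul 2)
  refine hbd.mono' hmeas (ae_of_all _ fun x => ?_)
  have hden : (0:ℝ) < 1 + x ^ 2 := by positivity
  rw [Real.norm_eq_abs, abs_div, abs_of_pos hden]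
  have := aux_abs_log_le (abs_nonneg x)
  refine le_trans (div_le_div_of_nonneg_right this hden.le) (le_of_eq (by ring))

theorem stmt_12 (n : ℕ) (hn : 1 ≤ n) (fn : ℝ → ℝ)
    (hfn : ∀ x : ℝ, x ≠ 0 → fn x =
      (1 / ((2 * (n : ℝ) + 1) * Real.sqrt π)) *
        |x| ^ (-(2 * (n : ℝ)) / (2 * (n : ℝ) + 1)) *
        Real.exp (-(|x| ^ ((2 : ℝ) / (2 * (n : ℝ) + 1))))) :
    Integrable (fun x : ℝ => -Real.log (fn x) / (1 + x ^ 2)) := by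
  set a : ℝ := 2 * (n : ℝ) / (2 * (n : ℝ) + 1) with ha
  set b : ℝ := 2 / (2 * (n : ℝ) + 1) with hb
  set C : ℝ := (2 * (n : ℝ) + 1) * Real.sqrt π with hC
  have hn1 : (1:ℝ) ≤ (n:ℝ) := by exact_mod_cast hn
  have hden : (0:ℝ) < 2 * (n : ℝ) + 1 := by linarith
  have hCpos : 0 < C := mul_pos hden (Real.sqrt_pos.2 Real.pi_pos)
  have hb0 : (0:ℝ) < b := by positivity
  have hb1 : b < 1 := by
    rw [hb, div_lt_one hden]; linarith
  have ha1 : a < 1 := by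
    rw [ha, div_lt_one hden]; linarith
  have ha0 : 0 < a := by
    rw [ha]; positivity
  -- the explicit integrable majorant function
  have hF : Integrable (fun x : ℝ =>
      Real.log C * (1 + x ^ 2)⁻¹ + a * (Real.log |x| / (1 + x ^ 2))
        + |x| ^ b / (1 + x ^ 2)) :=
    ((integrable_inv_one_add_sq.const_mul _).add
      (aux_integrable_log.const_mul a)).add
      (aux_integrable_rpow (by linarith) hb1)
  refine hF.congr ?_
  have h0 : ({0}ᶜ : Set ℝ) ∈ ae (volume : Measure ℝ) :=
    compl_mem_ae_iff.2 (measure_singleton 0)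
  filter_upwards [h0] with x hx
  have hx0 : x ≠ 0 := hx
  have habs : 0 < |x| := abs_pos.2 hx0
  have hlog : Real.log (fn x) = -Real.log C + (-a) * Real.log |x| - |x| ^ b := by
    rw [hfn x hx0]
    have h1 : (1 / C) ≠ 0 := one_div_ne_zero hCpos.ne'
    have h2 : |x| ^ (-(2 * (n : ℝ)) / (2 * (n : ℝ) + 1)) ≠ 0 :=
      (Real.rpow_pos_of_pos habs _).ne'
    have h3 : Real.exp (-(|x| ^ ((2 : ℝ) / (2 * (n : ℝ) + 1)))) ≠ 0 := Real.exp_ne_zero _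
    rw [Real.log_mul (mul_ne_zero h1 h2) h3, Real.log_mul h1 h2,
      Real.log_exp, Real.log_rpow habs, one_div, Real.log_inv]
    have : -(2 * (n : ℝ)) / (2 * (n : ℝ) + 1) = -a := by rw [ha]; ring
    rw [this, hb]
    ring
  rw [hlog]
  have : -(-Real.log C + (-a) * Real.log |x| - |x| ^ b)
      = Real.log C + a * Real.log |x| + |x| ^ b := by ring
  rw [this]
  have hne : (1 + x ^ 2 : ℝ) ≠ 0 := by positivity
  field_simp
end

section
/- Let $\alpha > 4$ and $f_\alpha(x) = \frac{2}{\alpha\sqrt{\pi}} x^{1/\alpha - 1} \exp(-x^{2/\alpha})$ for $x > 0$ (the density of $|X|^\alpha$ where $X$ has density $\frac{1}{\sqrt{\pi}} e^{-x^2}$). Then the Stieltjes-case Krein integral is finite: $\int_0^\infty \frac{-\log f_\alpha(x^2)}{1 + x^2}\,dx < \infty$. -/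
open MeasureTheory Real

theorem stmt_13 (α : ℝ) (hα : 4 < α) (fα : ℝ → ℝ)
    (hfα : ∀ x > 0, fα x =
      (2 / (α * Real.sqrt π)) * x ^ (1 / α - 1) * Real.exp (-(x ^ (2 / α)))) :
    IntegrableOn (fun x : ℝ => -Real.log (fα (x ^ 2)) / (1 + x ^ 2)) (Set.Ioi 0) := by
  have hα0 : 0 < α := by linarith
  set c₁ : ℝ := -Real.log (2 / (α * Real.sqrt π)) with hc₁
  set c₂ : ℝ := 2 * (1 - 1 / α) with hc₂
  set G : ℝ → ℝ := fun x => (c₁ + c₂ * Real.log x + x ^ (4 / α)) / (1 + x ^ 2) with hG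
  -- Step 1: the integrand equals G on Ioi 0
  have key : Set.EqOn G (fun x : ℝ => -Real.log (fα (x ^ 2)) / (1 + x ^ 2)) (Set.Ioi 0) := by
    intro x hx
    have hx0 : (0 : ℝ) < x := hx
    have hx2 : (0 : ℝ) < x ^ 2 := by positivity
    have hπ : (0 : ℝ) < Real.sqrt π := Real.sqrt_pos.mpr Real.pi_pos
    have hA : (2 : ℝ) / (α * Real.sqrt π) ≠ 0 := by positivity
    have hB : ((x ^ 2 : ℝ)) ^ (1 / α - 1) ≠ 0 := (Real.rpow_pos_of_pos hx2 _).ne'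
    have hC : Real.exp (-((x ^ 2 : ℝ) ^ (2 / α))) ≠ 0 := Real.exp_ne_zero _
    have hlog2 : Real.log (x ^ 2) = 2 * Real.log x := by
      rw [Real.log_pow]; push_cast; ring
    have hpow : ((x ^ 2 : ℝ)) ^ (2 / α) = x ^ (4 / α) := by
      rw [← Real.rpow_natCast x 2, ← Real.rpow_mul hx0.le]
      norm_num
      ring_nf
    simp only [hG]
    rw [hfα _ hx2, Real.log_mul (mul_ne_zero hA hB) hC, Real.log_mul hA hB,
      Real.log_exp, Real.log_rpow hx2, hlog2, hpow, hc₁, hc₂]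
    ring
  -- Step 2: G is integrable on Ioi 0
  have hmeas : ∀ s : Set ℝ, AEStronglyMeasurable G (volume.restrict s) := by
    intro s
    apply Measurable.aestronglyMeasurable
    simp only [hG]
    exact ((measurable_const.add (measurable_const.mul Real.measurable_log)).add
      (by fun_prop : Measurable fun x : ℝ => x ^ (4 / α))).div (by fun_prop)
  have h4α : 4 / α < 1 := (div_lt_one hα0).mpr (by linarith)
  have h4α0 : 0 < 4 / α := by positivity
  set r : ℝ := max (1 / 2) (4 / α) with hr
  have hr1 : r < 1 := max_lt (by norm_num) h4α
  have hr0 : (1:ℝ)/2 ≤ r := le_max_left _ _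
  set B : ℝ := |c₁| + 2 * |c₂| + 1 with hB
  have hBnn : 0 ≤ B := by positivity
  have int1 : IntegrableOn G (Set.Ioc 0 1) := by
    have hg : IntegrableOn (fun x : ℝ => B * x ^ (-(1/2) : ℝ)) (Set.Ioc 0 1) := by
      have h0 := intervalIntegral.intervalIntegrable_rpow' (a := 0) (b := 1)
        (r := -(1/2)) (by norm_num)
      rw [intervalIntegrable_iff_integrableOn_Ioc_of_le (by norm_num : (0:ℝ) ≤ 1)] at h0
      exact h0.const_mul B
    refine Integrable.mono' hg (hmeas _) ?_
    rw [ae_restrict_iff' measurableSet_Ioc]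
    refine Filter.Eventually.of_forall fun x hx => ?_
    obtain ⟨hx0, hx1⟩ := hx
    have hxr : (1:ℝ) ≤ x ^ (-(1/2) : ℝ) := by
      rw [Real.rpow_neg hx0.le, le_inv_comm₀ one_pos (Real.rpow_pos_of_pos hx0 _)]
      simpa using Real.rpow_le_one hx0.le hx1 (by norm_num)
    have hlogb : |Real.log x| ≤ 2 * x ^ (-(1/2) : ℝ) := by
      have hl0 : Real.log x ≤ 0 := Real.log_nonpos hx0.le hx1
      rw [abs_of_nonpos hl0]
      have := Real.log_le_rpow_div (x := x⁻¹) (by positivity) (ε := 1/2) (by norm_num)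
      rw [Real.log_inv, Real.inv_rpow hx0.le, ← Real.rpow_neg hx0.le] at this
      calc -Real.log x ≤ x ^ (-(1/2) : ℝ) / (1/2) := this
        _ = 2 * x ^ (-(1/2) : ℝ) := by ring
    have hpow1 : x ^ (4 / α) ≤ 1 := Real.rpow_le_one hx0.le hx1 h4α0.le
    have hden : (1:ℝ) ≤ 1 + x ^ 2 := by nlinarith
    have habs : |c₁ + c₂ * Real.log x + x ^ (4 / α)| ≤
        |c₁| + |c₂| * |Real.log x| + x ^ (4 / α) := by
      refine (abs_add_le _ _).trans ?_
      have h2 : |x ^ (4 / α)| = x ^ (4 / α) := abs_of_pos (Real.rpow_pos_of_pos hx0 _)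
      have h1 : |c₁ + c₂ * Real.log x| ≤ |c₁| + |c₂| * |Real.log x| := by
        refine (abs_add_le _ _).trans ?_
        rw [abs_mul]
      rw [h2]; linarith
    have hGx : ‖G x‖ = |c₁ + c₂ * Real.log x + x ^ (4 / α)| / (1 + x ^ 2) := by
      rw [Real.norm_eq_abs, abs_div, abs_of_pos (a := 1 + x ^ 2) (by positivity)]
    rw [hGx]
    have hstep : |c₁ + c₂ * Real.log x + x ^ (4 / α)| ≤ B * x ^ (-(1/2) : ℝ) := by
      have hll : |c₂| * |Real.log x| ≤ |c₂| * (2 * x ^ (-(1/2) : ℝ)) :=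
        mul_le_mul_of_nonneg_left hlogb (abs_nonneg _)
      rw [hB]
      nlinarith [habs, hll, hpow1, hxr, abs_nonneg c₁, abs_nonneg c₂,
        mul_nonneg (abs_nonneg c₁) (sub_nonneg.mpr hxr)]
    calc |c₁ + c₂ * Real.log x + x ^ (4 / α)| / (1 + x ^ 2)
        ≤ |c₁ + c₂ * Real.log x + x ^ (4 / α)| := div_le_self (abs_nonneg _) hden
      _ ≤ B * x ^ (-(1/2) : ℝ) := hstep
  have int2 : IntegrableOn G (Set.Ioi 1) := by
    have hg : IntegrableOn (fun x : ℝ => B * x ^ (r - 2)) (Set.Ioi 1) :=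
      (integrableOn_Ioi_rpow_of_lt (by linarith) one_pos).const_mul B
    refine Integrable.mono' hg (hmeas _) ?_
    rw [ae_restrict_iff' measurableSet_Ioi]
    refine Filter.Eventually.of_forall fun x hx => ?_
    have hx1 : (1:ℝ) < x := hx
    have hx0 : (0:ℝ) < x := lt_trans one_pos hx1
    have hxr0 : 0 < x ^ r := Real.rpow_pos_of_pos hx0 r
    have hhalf : x ^ ((1:ℝ)/2) ≤ x ^ r := Real.rpow_le_rpow_of_exponent_le hx1.le hr0
    have hfour : x ^ (4/α) ≤ x ^ r :=
      Real.rpow_le_rpow_of_exponent_le hx1.le (le_max_right _ _)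
    have hone : (1:ℝ) ≤ x ^ r :=
      Real.one_le_rpow hx1.le (by linarith)
    have hlogb : Real.log x ≤ 2 * x ^ ((1:ℝ)/2) := by
      have := Real.log_le_rpow_div (x := x) hx0.le (ε := 1/2) (by norm_num)
      calc Real.log x ≤ x ^ ((1:ℝ)/2) / (1/2) := this
        _ = 2 * x ^ ((1:ℝ)/2) := by ring
    have hlog0 : 0 ≤ Real.log x := Real.log_nonneg hx1.le
    have hnum : |c₁ + c₂ * Real.log x + x ^ (4 / α)| ≤ B * x ^ r := by
      have habs : |c₁ + c₂ * Real.log x + x ^ (4 / α)| ≤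
          |c₁| + |c₂| * Real.log x + x ^ (4 / α) := by
        refine (abs_add_le _ _).trans ?_
        have h2 : |x ^ (4 / α)| = x ^ (4 / α) := abs_of_pos (Real.rpow_pos_of_pos hx0 _)
        have h1 : |c₁ + c₂ * Real.log x| ≤ |c₁| + |c₂| * Real.log x := by
          refine (abs_add_le _ _).trans ?_
          rw [abs_mul, abs_of_nonneg hlog0]
        rw [h2]; linarith
      have hlog2 : |c₂| * Real.log x ≤ 2 * |c₂| * x ^ r := by
        calc |c₂| * Real.log x ≤ |c₂| * (2 * x ^ ((1:ℝ)/2)) :=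
              mul_le_mul_of_nonneg_left hlogb (abs_nonneg _)
          _ ≤ |c₂| * (2 * x ^ r) := by gcongr
          _ = 2 * |c₂| * x ^ r := by ring
      have hc1 : |c₁| ≤ |c₁| * x ^ r := le_mul_of_one_le_right (abs_nonneg _) hone
      rw [hB]
      nlinarith [habs, hlog2, hc1, hfour]
    have hx2pos : (0:ℝ) < x ^ 2 := by positivity
    calc ‖G x‖ = |c₁ + c₂ * Real.log x + x ^ (4 / α)| / (1 + x ^ 2) := by
          rw [Real.norm_eq_abs, abs_div, abs_of_pos (a := 1 + x ^ 2) (by positivity)]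
      _ ≤ B * x ^ r / (x ^ 2) := by
          apply div_le_div₀ (by positivity) hnum hx2pos (by nlinarith)
      _ = B * x ^ (r - 2) := by
          rw [mul_div_assoc, ← Real.rpow_natCast x 2, ← Real.rpow_sub hx0]
          norm_num
  have : IntegrableOn G (Set.Ioi 0) := by
    rw [← Set.Ioc_union_Ioi_eq_Ioi (le_of_lt one_pos)]
    exact int1.union int2
  exact this.congr_fun key measurableSet_Ioi
end

section
/- Let $\xi_1, \dots, \xi_n$ be independent nonnegative random variables with moments $m_{i,k} = \mathbf{E}[\xi_i^k]$ satisfying $m_{i,k} = \mathcal{O}(k^{a_i k})$ as $k \to \infty$ for positive constants $a_1, \dots, a_n$ with $\sum_{i=1}^n a_i \le 2$. Then the product $Z_n = \prod_{i=1}^n \xi_i$ satisfies $\mathbf{E}[Z_n^k] = \mathcal{O}(k^{2k})$ as $k \to \infty$, and hence $\sqrt{Z_n}$ has a moment generating function (Hardy's condition). -/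
/-!
Independence turns moments of the product into products of moments, so
`E[Z^k] ≤ C k^{(∑ aᵢ) k} ≤ C k^{2k}`. For Hardy's condition use
`eˣ ≤ 2 cosh x = 2 ∑ x^{2m}/(2m)!` with `x = √Z / 2`: the `m`-th term has expectation at most
`C m^{2m} / (4^m (2m)!)`, and `(2m)^{2m} ≤ e^{2m} (2m)!` bounds this by `C ((e/4)²)^m`,
a convergent geometric series.
-/

open MeasureTheory Real ProbabilityTheory
open scoped Nat ENNReal

lemma Real.prod_rpow_le_rpow_of_sum_le {ι : Type*} {s : Finset ι} {x b : ℝ} {a : ι → ℝ}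
    (hx : 1 ≤ x) (h : ∑ i ∈ s, a i ≤ b) : ∏ i ∈ s, x ^ a i ≤ x ^ b := by
  rw [← rpow_sum_of_pos (by linarith)]
  exact rpow_le_rpow_of_exponent_le hx h

namespace ProbabilityTheory

variable {Ω ι : Type*} [MeasurableSpace Ω] {μ : Measure Ω} [Fintype ι] {X : ι → Ω → ℝ}

lemma iIndepFun.integrable_fun_prod (hX : iIndepFun X μ) (mX : ∀ i, Measurable (X i))
    (hint : ∀ i, Integrable (X i) μ) : Integrable (fun ω => ∏ i, X i ω) μ := by
  refine ⟨Finset.aestronglyMeasurable_fun_prod _ fun i _ => (hint i).1, ?_⟩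
  have hXnorm : iIndepFun (fun i ω => (‖X i ω‖₊ : ℝ≥0∞)) μ :=
    hX.comp (fun _ x => (‖x‖₊ : ℝ≥0∞)) fun _ => by fun_prop
  simp only [HasFiniteIntegral, enorm_eq_nnnorm, nnnorm_prod, ENNReal.ofNNReal_finsetProd]
  rw [lintegral_prod_eq_prod_lintegral_of_indepFun _ _ hXnorm fun i => by fun_prop]
  exact ENNReal.prod_lt_top fun i _ => (hint i).2

lemma iIndepFun.integrable_fun_prod_pow (hX : iIndepFun X μ) (mX : ∀ i, Measurable (X i))
    {k : ℕ} (hint : ∀ i, Integrable (fun ω => X i ω ^ k) μ) :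
    Integrable (fun ω => (∏ i, X i ω) ^ k) μ := by
  simp_rw [← Finset.prod_pow]
  exact (hX.comp (fun _ x => x ^ k) fun _ => measurable_id.pow_const k).integrable_fun_prod
    (fun i => (mX i).pow_const k) hint

lemma iIndepFun.integral_fun_prod_pow (hX : iIndepFun X μ) (mX : ∀ i, AEMeasurable (X i) μ)
    (k : ℕ) : ∫ ω, (∏ i, X i ω) ^ k ∂μ = ∏ i, ∫ ω, X i ω ^ k ∂μ := by
  simp_rw [← Finset.prod_pow]
  exact hX.integral_fun_prod_comp mX fun i => (continuous_pow k).aestronglyMeasurable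

lemma iIndepFun.integral_fun_prod_pow_le (hX : iIndepFun X μ) (mX : ∀ i, AEMeasurable (X i) μ)
    (hX0 : ∀ i, 0 ≤ᵐ[μ] X i) {a D : ι → ℝ} {b : ℝ} (hab : ∑ i, a i ≤ b) {k : ℕ}
    (hk : 0 < k)
    (hmom : ∀ i, ∫ ω, X i ω ^ k ∂μ ≤ D i * (k : ℝ) ^ (a i * k)) :
    ∫ ω, (∏ i, X i ω) ^ k ∂μ ≤ (∏ i, D i) * (k : ℝ) ^ (b * k) := by
  have hk1 : (1 : ℝ) ≤ k := by exact_mod_cast hk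
  have hmom0 (i : ι) : 0 ≤ ∫ ω, X i ω ^ k ∂μ :=
    integral_nonneg_of_ae ((hX0 i).mono fun ω h => pow_nonneg h k)
  have hD (i : ι) : 0 ≤ D i :=
    nonneg_of_mul_nonneg_left ((hmom0 i).trans (hmom i)) (by positivity)
  calc ∫ ω, (∏ i, X i ω) ^ k ∂μ
      = ∏ i, ∫ ω, X i ω ^ k ∂μ := hX.integral_fun_prod_pow mX k
    _ ≤ ∏ i, D i * (k : ℝ) ^ (a i * k) :=
        Finset.prod_le_prod (fun i _ => hmom0 i) fun i _ => hmom i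
    _ = (∏ i, D i) * ∏ i, (k : ℝ) ^ (a i * k) := Finset.prod_mul_distrib
    _ ≤ (∏ i, D i) * (k : ℝ) ^ (b * k) := by
        gcongr
        · exact Finset.prod_nonneg fun i _ => hD i
        · exact prod_rpow_le_rpow_of_sum_le hk1 (by rw [← Finset.sum_mul]; gcongr)

end ProbabilityTheory

lemma ENNReal.ofReal_exp_le_two_mul_tsum (x : ℝ) :
    ENNReal.ofReal (exp x) ≤ 2 * ∑' m : ℕ, ENNReal.ofReal (x ^ (2 * m) / (2 * m)!) := by
  have hcosh : exp x ≤ 2 * cosh x := by rw [cosh_eq]; linarith [exp_pos (-x)]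
  have hterm (m : ℕ) : 0 ≤ x ^ (2 * m) / (2 * m)! :=
    div_nonneg ((even_two_mul m).pow_nonneg x) (by positivity)
  rw [← ENNReal.ofReal_tsum_of_nonneg hterm (hasSum_cosh x).summable, (hasSum_cosh x).tsum_eq,
    ← ENNReal.ofReal_ofNat 2, ← ENNReal.ofReal_mul zero_le_two]
  exact ENNReal.ofReal_le_ofReal hcosh

lemma natCast_pow_two_mul_div_le (m : ℕ) :
    (m : ℝ) ^ (2 * m) / (4 ^ m * (2 * m)!) ≤ ((exp 1 / 4) ^ 2) ^ m := by
  have h := pow_div_factorial_le_exp (x := ((2 * m : ℕ) : ℝ)) (by positivity) (2 * m)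
  rw [← exp_one_pow] at h
  calc (m : ℝ) ^ (2 * m) / (4 ^ m * (2 * m)!)
      = ((2 * m : ℕ) : ℝ) ^ (2 * m) / (2 * m)! / 16 ^ m := by
        push_cast
        rw [mul_pow, pow_mul (2 : ℝ), show (16 : ℝ) = 4 * 4 by norm_num, mul_pow]
        field_simp
        norm_num
    _ ≤ exp 1 ^ (2 * m) / 16 ^ m := by gcongr
    _ = ((exp 1 / 4) ^ 2) ^ m := by
        rw [div_pow, show (4 : ℝ) ^ 2 = 16 by norm_num, div_pow, ← pow_mul]

lemma lintegral_ofReal_pow_le_of_integral_pow_le {Ω : Type*} [MeasurableSpace Ω]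
    {μ : Measure Ω} [IsProbabilityMeasure μ] {Y : Ω → ℝ} (hY0 : 0 ≤ᵐ[μ] Y)
    (hint : ∀ m : ℕ, 0 < m → Integrable (fun ω => Y ω ^ m) μ) {C : ℝ}
    (hmom : ∀ m : ℕ, 0 < m → ∫ ω, Y ω ^ m ∂μ ≤ C * (m : ℝ) ^ (2 * (m : ℝ))) (m : ℕ) :
    ∫⁻ ω, ENNReal.ofReal (Y ω ^ m) ∂μ ≤ ENNReal.ofReal (max C 1 * (m : ℝ) ^ (2 * m)) := by
  rcases Nat.eq_zero_or_pos m with rfl | hm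
  · simp
  rw [← ofReal_integral_eq_lintegral_ofReal (hint m hm) (hY0.mono fun ω h => pow_nonneg h m)]
  refine ENNReal.ofReal_le_ofReal ((hmom m hm).trans ?_)
  rw [show (2 * (m : ℝ)) = ((2 * m : ℕ) : ℝ) by push_cast; ring, rpow_natCast]
  exact mul_le_mul_of_nonneg_right (le_max_left _ _) (by positivity)

lemma integrable_exp_half_mul_sqrt_of_moment_le {Ω : Type*} [MeasurableSpace Ω] {μ : Measure Ω}
    [IsProbabilityMeasure μ] {Y : Ω → ℝ} (hY : AEMeasurable Y μ) (hY0 : 0 ≤ᵐ[μ] Y)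
    (hint : ∀ m : ℕ, 0 < m → Integrable (fun ω => Y ω ^ m) μ) {C : ℝ}
    (hmom : ∀ m : ℕ, 0 < m → ∫ ω, Y ω ^ m ∂μ ≤ C * (m : ℝ) ^ (2 * (m : ℝ))) :
    Integrable (fun ω => exp (2⁻¹ * √(Y ω))) μ := by
  set C' := max C 1
  have hlmom := lintegral_ofReal_pow_le_of_integral_pow_le hY0 hint hmom
  set b : ℕ → ℝ := fun m => ((4 : ℝ) ^ m * (2 * m)!)⁻¹
  have hterm {y : ℝ} (hy : 0 ≤ y) (m : ℕ) :
      (2⁻¹ * √y) ^ (2 * m) / (2 * m)! = b m * y ^ m := by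
    rw [mul_pow, pow_mul, pow_mul, sq_sqrt hy, show (2⁻¹ : ℝ) ^ 2 = 4⁻¹ by norm_num,
      inv_pow]
    simp only [b]
    field_simp
  have hcoef (m : ℕ) : b m * (C' * (m : ℝ) ^ (2 * m)) ≤ C' * ((exp 1 / 4) ^ 2) ^ m := by
    calc b m * (C' * (m : ℝ) ^ (2 * m)) = C' * ((m : ℝ) ^ (2 * m) / (4 ^ m * (2 * m)!)) := by
          simp only [b]; ring
      _ ≤ C' * ((exp 1 / 4) ^ 2) ^ m := by gcongr; exact natCast_pow_two_mul_div_le m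
  have hq : ENNReal.ofReal ((exp 1 / 4) ^ 2) < 1 := by
    rw [ENNReal.ofReal_lt_one]
    have := exp_one_lt_d9
    nlinarith [exp_pos 1]
  refine ⟨by fun_prop, ?_⟩
  rw [hasFiniteIntegral_iff_ofReal (ae_of_all _ fun ω => (exp_pos _).le)]
  calc ∫⁻ ω, ENNReal.ofReal (exp (2⁻¹ * √(Y ω))) ∂μ
      ≤ ∫⁻ ω, 2 * ∑' m : ℕ, ENNReal.ofReal (b m) * ENNReal.ofReal (Y ω ^ m) ∂μ := by
        refine lintegral_mono_ae (hY0.mono fun ω hω => ?_)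
        simp_rw [← ENNReal.ofReal_mul (by positivity : 0 ≤ b _), ← hterm hω]
        exact ENNReal.ofReal_exp_le_two_mul_tsum _
    _ = 2 * ∑' m : ℕ, ENNReal.ofReal (b m) * ∫⁻ ω, ENNReal.ofReal (Y ω ^ m) ∂μ := by
        rw [lintegral_const_mul'' _ (by fun_prop), lintegral_tsum fun m => by fun_prop]
        exact congrArg _ (tsum_congr fun m => lintegral_const_mul'' _ (by fun_prop))
    _ ≤ 2 * ∑' m : ℕ, ENNReal.ofReal C' * ENNReal.ofReal ((exp 1 / 4) ^ 2) ^ m := by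
        gcongr 2 * ?_
        refine ENNReal.tsum_le_tsum fun m => ?_
        refine (mul_le_mul_right (hlmom m) _).trans ?_
        rw [← ENNReal.ofReal_pow (by positivity), ← ENNReal.ofReal_mul (by positivity),
          ← ENNReal.ofReal_mul (by positivity)]
        exact ENNReal.ofReal_le_ofReal (hcoef m)
    _ < ⊤ := by
        rw [ENNReal.tsum_mul_left]
        exact ENNReal.mul_lt_top (by norm_num)
          (ENNReal.mul_lt_top ENNReal.ofReal_lt_top (tsum_geometric_lt_top.2 hq))

theorem stmt_16_general {Ω : Type*} [MeasurableSpace Ω] (μ : Measure Ω) [IsProbabilityMeasure μ]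
    (n : ℕ) (ξ : Fin n → Ω → ℝ)
    (hmeas : ∀ i, Measurable (ξ i))
    (hindep : iIndepFun (m := fun _ => Real.measurableSpace) ξ μ)
    (hnonneg : ∀ i, ∀ᵐ ω ∂μ, 0 ≤ ξ i ω)
    (hint : ∀ i, ∀ k : ℕ, 0 < k → Integrable (fun ω => ξ i ω ^ k) μ)
    (a : Fin n → ℝ) (hsum : ∑ i, a i ≤ 2)
    (hgrowth : ∀ i, ∃ C > 0, ∀ k : ℕ, 0 < k →
      ∫ ω, ξ i ω ^ k ∂μ ≤ C * (k : ℝ) ^ (a i * k)) :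
    (∃ C > 0, ∀ k : ℕ, 0 < k →
      ∫ ω, (∏ i, ξ i ω) ^ k ∂μ ≤ C * (k : ℝ) ^ (2 * (k : ℝ))) ∧
    (∃ c > 0, Integrable (fun ω => Real.exp (c * Real.sqrt (∏ i, ξ i ω))) μ) := by
  choose D hD0 hD using hgrowth
  have hmom (k : ℕ) (hk : 0 < k) :
      ∫ ω, (∏ i, ξ i ω) ^ k ∂μ ≤ (∏ i, D i) * (k : ℝ) ^ (2 * (k : ℝ)) :=
    hindep.integral_fun_prod_pow_le (fun i => (hmeas i).aemeasurable) hnonneg hsum hk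
      fun i => hD i k hk
  refine ⟨⟨∏ i, D i, Finset.prod_pos fun i _ => hD0 i, hmom⟩, 2⁻¹, by norm_num, ?_⟩
  have hprod0 : 0 ≤ᵐ[μ] fun ω => ∏ i, ξ i ω := by
    filter_upwards [ae_all_iff.2 hnonneg] with ω hω
    exact Finset.prod_nonneg fun i _ => hω i
  exact integrable_exp_half_mul_sqrt_of_moment_le (by fun_prop) hprod0
    (fun m hm => hindep.integrable_fun_prod_pow hmeas fun i => hint i m hm) hmom

theorem stmt_16 {Ω : Type*} [MeasurableSpace Ω] (μ : Measure Ω) [IsProbabilityMeasure μ]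
    (n : ℕ) (hn : 1 ≤ n) (ξ : Fin n → Ω → ℝ)
    (hmeas : ∀ i, Measurable (ξ i))
    (hindep : iIndepFun (m := fun _ => Real.measurableSpace) ξ μ)
    (hnonneg : ∀ i, ∀ᵐ ω ∂μ, 0 ≤ ξ i ω)
    (hint : ∀ i, ∀ k : ℕ, 0 < k → Integrable (fun ω => ξ i ω ^ k) μ)
    (a : Fin n → ℝ) (ha : ∀ i, 0 < a i) (hsum : ∑ i, a i ≤ 2)
    (hgrowth : ∀ i, ∃ C > 0, ∀ k : ℕ, 0 < k →
      ∫ ω, ξ i ω ^ k ∂μ ≤ C * (k : ℝ) ^ (a i * k)) :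
    (∃ C > 0, ∀ k : ℕ, 0 < k →
      ∫ ω, (∏ i, ξ i ω) ^ k ∂μ ≤ C * (k : ℝ) ^ (2 * (k : ℝ))) ∧
    (∃ c > 0, Integrable (fun ω => Real.exp (c * Real.sqrt (∏ i, ξ i ω))) μ) :=
  stmt_16_general μ n ξ hmeas hindep hnonneg hint a hsum hgrowth
end
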